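/- Any pointed cube path in a higher-dimensional automaton i : * → X is homotopic to a fan-shaped cube path. -/

import Mathlib

set_option autoImplicit false

/-- A precubical set: a graded set with face maps `δ_k^ν` (ν encoded as `Bool`,
`false` = lower face `δ^0`, `true` = upper face `δ^1`; indices are 0-based)
satisfying the precubical identity. -/
structure PCSet : Type 1 where
  cube : ℕ → Type
  face : ∀ {n : ℕ}, Bool → Fin (n + 1) → cube (n + 1) → cube n
  precub : ∀ {n : ℕ} (ν μ : Bool) (k l : ℕ) (hk : k < n + 1) (hl : l < n + 2)
      (_ : k < l) (x : cube (n + 2)),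
      face ν ⟨k, hk⟩ (face μ ⟨l, hl⟩ x) =
        face μ ⟨l - 1, by omega⟩ (face ν ⟨k, by omega⟩ x)

namespace PCSet

/-- A cube of arbitrary dimension. -/
abbrev Cell (X : PCSet) : Type := Σ n : ℕ, X.cube n

/-- One step of a cube path: either `x = δ_k^0 y` or `y = δ_k^1 x`. -/
def Step (X : PCSet) (x y : X.Cell) : Prop :=
  (∃ (n : ℕ) (k : Fin (n + 1)) (c : X.cube (n + 1)),
      x = ⟨n, X.face false k c⟩ ∧ y = ⟨n + 1, c⟩) ∨
  (∃ (n : ℕ) (k : Fin (n + 1)) (c : X.cube (n + 1)),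
      x = ⟨n + 1, c⟩ ∧ y = ⟨n, X.face true k c⟩)

/-- A cube path: a nonempty sequence of cubes, consecutive ones related by `Step`. -/
def IsCubePath (X : PCSet) (l : List X.Cell) : Prop :=
  l ≠ [] ∧ l.Chain' X.Step

/-- Adjacency condition (1): `x_{p−1} = δ_k^0 x_p`, `x_p = δ_ℓ^0 x_{p+1}`,
`y_{p−1} = δ_{ℓ−1}^0 y_p`, `y_p = δ_k^0 y_{p+1}`, `k < ℓ`.
Here `a = x_{p-1} = y_{p-1}`, `b = x_p`, `b' = y_p`, `c = x_{p+1} = y_{p+1}`. -/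
def Adj1 (X : PCSet) (a b b' c : X.Cell) : Prop :=
  ∃ (n k l : ℕ) (hk : k < n + 1) (hl : l < n + 2) (_ : k < l) (u : X.cube (n + 2)),
    c = ⟨n + 2, u⟩ ∧
    b = ⟨n + 1, X.face false ⟨l, hl⟩ u⟩ ∧
    b' = ⟨n + 1, X.face false ⟨k, by omega⟩ u⟩ ∧
    a = ⟨n, X.face false ⟨k, hk⟩ (X.face false ⟨l, hl⟩ u)⟩ ∧
    a = ⟨n, X.face false ⟨l - 1, by omega⟩ (X.face false ⟨k, by omega⟩ u)⟩

/-- Adjacency condition (2): `x_p = δ_k^1 x_{p−1}`, `x_{p+1} = δ_ℓ^1 x_p`,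
`y_p = δ_{ℓ−1}^1 y_{p−1}`, `y_{p+1} = δ_k^1 y_p`, `k < ℓ`. -/
def Adj2 (X : PCSet) (a b b' c : X.Cell) : Prop :=
  ∃ (n k l : ℕ) (hk : k < n + 2) (hl : l < n + 1) (_ : k < l) (u : X.cube (n + 2)),
    a = ⟨n + 2, u⟩ ∧
    b = ⟨n + 1, X.face true ⟨k, hk⟩ u⟩ ∧
    b' = ⟨n + 1, X.face true ⟨l - 1, by omega⟩ u⟩ ∧
    c = ⟨n, X.face true ⟨l, hl⟩ (X.face true ⟨k, hk⟩ u)⟩ ∧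
    c = ⟨n, X.face true ⟨k, by omega⟩ (X.face true ⟨l - 1, by omega⟩ u)⟩

/-- Adjacency condition (3): `x_p = δ_k^0 δ_ℓ^1 y_p`, `y_{p−1} = δ_k^0 y_p`,
`y_{p+1} = δ_ℓ^1 y_p`, `k < ℓ`. -/
def Adj3 (X : PCSet) (a b b' c : X.Cell) : Prop :=
  ∃ (n k l : ℕ) (hk : k < n + 1) (hl : l < n + 2) (_ : k < l) (u : X.cube (n + 2)),
    b' = ⟨n + 2, u⟩ ∧
    b = ⟨n, X.face false ⟨k, hk⟩ (X.face true ⟨l, hl⟩ u)⟩ ∧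
    a = ⟨n + 1, X.face false ⟨k, by omega⟩ u⟩ ∧
    c = ⟨n + 1, X.face true ⟨l, hl⟩ u⟩

/-- Adjacency condition (4): `x_p = δ_k^1 δ_ℓ^0 y_p`, `y_{p−1} = δ_ℓ^0 y_p`,
`y_{p+1} = δ_k^1 y_p`, `k < ℓ`. -/
def Adj4 (X : PCSet) (a b b' c : X.Cell) : Prop :=
  ∃ (n k l : ℕ) (hk : k < n + 1) (hl : l < n + 2) (_ : k < l) (u : X.cube (n + 2)),
    b' = ⟨n + 2, u⟩ ∧
    b = ⟨n, X.face true ⟨k, hk⟩ (X.face false ⟨l, hl⟩ u)⟩ ∧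
    a = ⟨n + 1, X.face false ⟨l, hl⟩ u⟩ ∧
    c = ⟨n + 1, X.face true ⟨k, by omega⟩ u⟩

/-- One of the four adjacency conditions holds, possibly with the roles of the
two paths exchanged. -/
def AdjMid (X : PCSet) (a b b' c : X.Cell) : Prop :=
  Adj1 X a b b' c ∨ Adj2 X a b b' c ∨ Adj3 X a b b' c ∨ Adj4 X a b b' c ∨
  Adj1 X a b' b c ∨ Adj2 X a b' b c ∨ Adj3 X a b' b c ∨ Adj4 X a b' b c

/-- Two cube paths are adjacent: they agree everywhere except at exactly one
(interior) index `p`, where one of the four exchange conditions holds. -/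
def Adjacent (X : PCSet) (l₁ l₂ : List X.Cell) : Prop :=
  X.IsCubePath l₁ ∧ X.IsCubePath l₂ ∧ l₁.length = l₂.length ∧
  ∃ p : ℕ, 0 < p ∧ p + 1 < l₁.length ∧
    (∀ q : ℕ, q ≠ p → l₁[q]? = l₂[q]?) ∧
    l₁[p]? ≠ l₂[p]? ∧
    ∃ a b b' c : X.Cell,
      l₁[p - 1]? = some a ∧ l₁[p]? = some b ∧ l₂[p]? = some b' ∧
      l₁[p + 1]? = some c ∧ X.AdjMid a b b' c

/-- Homotopy of cube paths: the reflexive-transitive closure of adjacency. -/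
def Homotopic (X : PCSet) : List X.Cell → List X.Cell → Prop :=
  Relation.ReflTransGen X.Adjacent

/-- Iterated application of face maps, parameters in application order. -/
inductive IterFace (X : PCSet) : X.Cell → List (ℕ × Bool) → X.Cell → Prop
  | nil (c : X.Cell) : IterFace X c [] c
  | cons {n : ℕ} (ν : Bool) (k : Fin (n + 1)) (c : X.cube (n + 1)) {l : List (ℕ × Bool)}
      {res : X.Cell} :
      IterFace X ⟨n, X.face ν k c⟩ l res →
      IterFace X ⟨n + 1, c⟩ ((k.1, ν) :: l) res

/-- `p` is obtained from `c` as `δ_{k_1}^{ν_1}⋯δ_{k_q}^{ν_q} c` where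
`k_1 < ⋯ < k_q` (in application order, the index list `ks` is strictly
decreasing). -/
def RepGen (X : PCSet) (c p : X.Cell) (ks : List ℕ) : Prop :=
  List.Pairwise (· > ·) ks ∧
  ∃ νs : List Bool, νs.length = ks.length ∧ IterFace X c (ks.zip νs) p

/-- `l` is a representing sequence for a precubical path object. -/
def IsRep (X : PCSet) (l : List X.Cell) : Prop :=
  l ≠ [] ∧ l.Nodup ∧ l.Chain' X.Step ∧
  ∀ p : X.Cell, ∃ c ∈ l, (∃ ks, RepGen X c p ks) ∧
    ∀ ks₁ ks₂ : List ℕ, RepGen X c p ks₁ → RepGen X c p ks₂ → ks₁ = ks₂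

/-- Morphisms of precubical sets. -/
structure Hom (X Y : PCSet) where
  map : ∀ n : ℕ, X.cube n → Y.cube n
  comm : ∀ (n : ℕ) (ν : Bool) (k : Fin (n + 1)) (x : X.cube (n + 1)),
    map n (X.face ν k x) = Y.face ν k (map (n + 1) x)

def Hom.id (X : PCSet) : Hom X X where
  map _ x := x
  comm _ _ _ _ := rfl

def Hom.comp {X Y Z : PCSet} (g : Hom Y Z) (f : Hom X Y) : Hom X Z where
  map n x := g.map n (f.map n x)
  comm n ν k x := by simp only [f.comm, g.comm]

def Hom.cell {X Y : PCSet} (f : Hom X Y) (x : X.Cell) : Y.Cell := ⟨x.1, f.map x.1 x.2⟩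

/-- `R` is a precubical subset of the product `X × Y`. -/
def PrecubRel (X Y : PCSet) (R : Set (X.Cell × Y.Cell)) : Prop :=
  (∀ p ∈ R, p.1.1 = p.2.1) ∧
  ∀ (n : ℕ) (x : X.cube (n + 1)) (y : Y.cube (n + 1)),
    ((⟨n + 1, x⟩, ⟨n + 1, y⟩) : X.Cell × Y.Cell) ∈ R →
    ∀ (ν : Bool) (k : Fin (n + 1)),
      ((⟨n, X.face ν k x⟩, ⟨n, Y.face ν k y⟩) : X.Cell × Y.Cell) ∈ R

/-- One-step bisimulation via a precubical relation (condition (2) of Thm 3.4). -/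
def OneStepBisim (X Y : PCSet) (bx : X.Cell) (by' : Y.Cell) : Prop :=
  ∃ R : Set (X.Cell × Y.Cell), PrecubRel X Y R ∧ (bx, by') ∈ R ∧
    ∀ (n : ℕ) (x₁ : X.cube n) (y₁ : Y.cube n),
      ((⟨n, x₁⟩, ⟨n, y₁⟩) : X.Cell × Y.Cell) ∈ R →
      (∀ (x₂ : X.cube (n + 1)) (k : Fin (n + 1)), x₁ = X.face false k x₂ →
        ∃ y₂ : Y.cube (n + 1), y₁ = Y.face false k y₂ ∧
          ((⟨n + 1, x₂⟩, ⟨n + 1, y₂⟩) : X.Cell × Y.Cell) ∈ R) ∧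
      (∀ (y₂ : Y.cube (n + 1)) (k : Fin (n + 1)), y₁ = Y.face false k y₂ →
        ∃ x₂ : X.cube (n + 1), x₁ = X.face false k x₂ ∧
          ((⟨n + 1, x₂⟩, ⟨n + 1, y₂⟩) : X.Cell × Y.Cell) ∈ R)

/-- Cube-path matching bisimulation (condition (3) of Thm 3.4). -/
def PathBisim (X Y : PCSet) (bx : X.Cell) (by' : Y.Cell) : Prop :=
  ∃ R : Set (X.Cell × Y.Cell), PrecubRel X Y R ∧ (bx, by') ∈ R ∧
    ∀ (x₁ : X.Cell) (y₁ : Y.Cell), (x₁, y₁) ∈ R →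
      (∀ lx : List X.Cell, X.IsCubePath lx → lx.head? = some x₁ →
        ∃ ly : List Y.Cell, Y.IsCubePath ly ∧ ly.head? = some y₁ ∧
          ly.length = lx.length ∧ ∀ pr ∈ lx.zip ly, pr ∈ R) ∧
      (∀ ly : List Y.Cell, Y.IsCubePath ly → ly.head? = some y₁ →
        ∃ lx : List X.Cell, X.IsCubePath lx ∧ lx.head? = some x₁ ∧
          lx.length = ly.length ∧ ∀ pr ∈ lx.zip ly, pr ∈ R)

/-- A fan-shaped cube path: one-dimensional (alternating dimensions 0 and 1)
until it has to build up to its end cube of dimension `n`. -/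
def IsFan (X : PCSet) (l : List X.Cell) : Prop :=
  ∃ (n : ℕ) (c : X.cube n), l.getLast? = some ⟨n, c⟩ ∧
    ∀ (i : ℕ) (hi : i < l.length),
      (i + n + 1 ≤ l.length → (l.get ⟨i, hi⟩).1 = if i % 2 = 0 then 0 else 1) ∧
      (l.length < i + n + 1 → (l.get ⟨i, hi⟩).1 = n + i + 1 - l.length)

/-- The cube path `(x_1, …, x_n, x)` obtained by repeatedly taking lower faces
`x_j = δ_{k_j}^0 ⋯ δ_{k_n}^0 x`, one for each choice of indices `k_j ≤ j`. -/
def lowerChain (X : PCSet) : ∀ (n : ℕ), X.cube n → (∀ j : Fin n, Fin (j.1 + 1)) → List X.Cell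
  | 0, x, _ => [⟨0, x⟩]
  | n + 1, x, ks =>
      lowerChain X n (X.face false (ks ⟨n, Nat.lt_succ_self n⟩) x)
        (fun j => ks ⟨j.1, by omega⟩) ++ [⟨n + 1, x⟩]

end PCSet

open PCSet

/-- A higher-dimensional automaton: a pointed precubical set. -/
structure HDA extends PCSet where
  base : cube 0

/-- Pointed morphisms of higher-dimensional automata. -/
structure HDAHom (X Y : HDA) where
  toHom : Hom X.toPCSet Y.toPCSet
  pointed : toHom.map 0 X.base = Y.base

def HDAHom.id (X : HDA) : HDAHom X X := ⟨Hom.id _, rfl⟩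

def HDAHom.comp {X Y Z : HDA} (g : HDAHom Y Z) (f : HDAHom X Y) : HDAHom X Z :=
  ⟨g.toHom.comp f.toHom, by
    show g.toHom.map 0 (f.toHom.map 0 X.base) = Z.base
    rw [f.pointed, g.pointed]⟩

def HDAHom.IsIso {X Y : HDA} (f : HDAHom X Y) : Prop :=
  ∃ g : HDAHom Y X, g.comp f = HDAHom.id X ∧ f.comp g = HDAHom.id Y

/-- A pointed cube path: a cube path starting in the base point. -/
def HDA.IsPointedPath (X : HDA) (l : List X.toPCSet.Cell) : Prop :=
  X.toPCSet.IsCubePath l ∧ l.head? = some ⟨0, X.base⟩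

/-- A cube is reachable if some pointed cube path ends in it. -/
def HDA.Reachable (X : HDA) (x : X.toPCSet.Cell) : Prop :=
  ∃ l, X.IsPointedPath l ∧ l.getLast? = some x

/-- The type of pointed cube paths of `X` ending in an `n`-cube. -/
def HDA.PPath (X : HDA) (n : ℕ) : Type :=
  { l : List X.toPCSet.Cell //
      X.IsPointedPath l ∧ ∃ c : X.cube n, l.getLast? = some ⟨n, c⟩ }

/-- A pointed precubical path object (object of the category HDP). -/
def HDA.IsPathObj (P : HDA) : Prop :=
  ∃ l, IsRep P.toPCSet l ∧ l.head? = some ⟨0, P.base⟩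

/-- A cube path extension: maps the representation of `P` to an initial segment
of the representation of `Q`. -/
def IsExtension {P Q : HDA} (f : HDAHom P Q) : Prop :=
  ∃ (lp : List P.toPCSet.Cell) (lq : List Q.toPCSet.Cell),
    IsRep P.toPCSet lp ∧ lp.head? = some ⟨0, P.base⟩ ∧
    IsRep Q.toPCSet lq ∧ lq.head? = some ⟨0, Q.base⟩ ∧
    ∃ hle : lp.length ≤ lq.length,
      ∀ (j : ℕ) (hj : j < lp.length),
        f.toHom.cell (lp.get ⟨j, hj⟩) = lq.get ⟨j, lt_of_lt_of_le hj hle⟩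

/-- Morphisms of the category HDP: generated by pointed cube path extensions
and isomorphisms between pointed precubical path objects. -/
inductive IsHDPHom : ∀ {P Q : HDA}, HDAHom P Q → Prop
  | ext {P Q : HDA} (f : HDAHom P Q) :
      P.IsPathObj → Q.IsPathObj → IsExtension f → IsHDPHom f
  | iso {P Q : HDA} (f : HDAHom P Q) :
      P.IsPathObj → Q.IsPathObj → f.IsIso → IsHDPHom f
  | comp {P Q R : HDA} {f : HDAHom P Q} {g : HDAHom Q R} :
      IsHDPHom f → IsHDPHom g → IsHDPHom (g.comp f)

/-- Open maps of HDA: right lifting property with respect to HDP. -/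
def IsOpenHom {X Y : HDA} (f : HDAHom X Y) : Prop :=
  ∀ (P Q : HDA) (g : HDAHom P Q), IsHDPHom g →
    ∀ (p : HDAHom P X) (q : HDAHom Q Y), f.comp p = q.comp g →
      ∃ r : HDAHom Q X, r.comp g = p ∧ f.comp r = q

/-- hd-bisimilarity: a span of open maps. -/
def HdBisimilar (X Y : HDA) : Prop :=
  ∃ (Z : HDA) (f : HDAHom Z X) (g : HDAHom Z Y), IsOpenHom f ∧ IsOpenHom g

/-- A higher-dimensional tree: every cube is the end of exactly one homotopy
class of pointed cube paths. -/
def HDA.IsTree (X : HDA) : Prop :=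
  ∀ x : X.toPCSet.Cell,
    (∃ l, X.IsPointedPath l ∧ l.getLast? = some x) ∧
    ∀ l₁ l₂ : List X.toPCSet.Cell, X.IsPointedPath l₁ → l₁.getLast? = some x →
      X.IsPointedPath l₂ → l₂.getLast? = some x → X.toPCSet.Homotopic l₁ l₂

/-- An unfolding of the HDA `X`: an HDA `Xu` whose `n`-cubes are exactly the
homotopy classes (`cls`) of pointed cube paths of `X` ending in an `n`-cube,
with the face maps, base point and projection of Definition 4.3. -/
structure Unfolding (X : HDA) where
  Xu : HDA
  proj : HDAHom Xu X
  cls : ∀ n : ℕ, X.PPath n → Xu.cube n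
  cls_eq : ∀ (n : ℕ) (a b : X.PPath n),
    cls n a = cls n b ↔ X.toPCSet.Homotopic a.1 b.1
  cls_surj : ∀ (n : ℕ) (x : Xu.cube n), ∃ a, cls n a = x
  cls_base : ∀ a : X.PPath 0, a.1 = [⟨0, X.base⟩] → cls 0 a = Xu.base
  face_true : ∀ (n : ℕ) (k : Fin (n + 1)) (a : X.PPath (n + 1)) (c : X.cube (n + 1)),
    a.1.getLast? = some ⟨n + 1, c⟩ →
    ∀ b : X.PPath n, b.1 = a.1 ++ [⟨n, X.toPCSet.face true k c⟩] →
      Xu.toPCSet.face true k (cls (n + 1) a) = cls n b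
  face_false : ∀ (n : ℕ) (k : Fin (n + 1)) (a : X.PPath (n + 1)) (c : X.cube (n + 1)),
    a.1.getLast? = some ⟨n + 1, c⟩ →
    ∀ b : X.PPath n,
      (Xu.toPCSet.face false k (cls (n + 1) a) = cls n b ↔
        b.1.getLast? = some ⟨n, X.toPCSet.face false k c⟩ ∧
          X.toPCSet.Homotopic (b.1 ++ [⟨n + 1, c⟩]) a.1)
  proj_cls : ∀ (n : ℕ) (a : X.PPath n) (c : X.cube n),
    a.1.getLast? = some ⟨n, c⟩ → proj.toHom.map n (cls n a) = c

/-- The set `δ̃_k^0 [l]` of Definition 4.3: pointed cube paths `l'` with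
`l'` ending in `δ_k^0 c` and `l' * (c) ∼ l`. -/
def predSet (X : HDA) (n : ℕ) (k : Fin (n + 1)) (c : X.cube (n + 1))
    (l : List X.toPCSet.Cell) : Set (List X.toPCSet.Cell) :=
  { l' | X.IsPointedPath l' ∧ l'.getLast? = some ⟨n, X.toPCSet.face false k c⟩ ∧
      X.toPCSet.Homotopic (l' ++ [(⟨n + 1, c⟩ : X.toPCSet.Cell)]) l }

/-- Prefix order on homotopy classes (cubes of an unfolding): some
representatives are prefix-related. -/
def Unfolding.ClassLe {X : HDA} (U : Unfolding X) (c d : U.Xu.toPCSet.Cell) : Prop :=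
  ∃ (a : X.PPath c.1) (b : X.PPath d.1),
    U.cls c.1 a = c.2 ∧ U.cls d.1 b = d.2 ∧ a.1 <+: b.1

/-- `h` is the morphism of unfoldings induced by `g` (i.e. `g̃`). -/
def IsUnfoldMap {X Y : HDA} (UX : Unfolding X) (UY : Unfolding Y)
    (g : HDAHom X Y) (h : HDAHom UX.Xu UY.Xu) : Prop :=
  ∀ (n : ℕ) (a : X.PPath n), ∃ b : Y.PPath n,
    b.1 = a.1.map g.toHom.cell ∧ h.toHom.map n (UX.cls n a) = UY.cls n b

/-- Open maps in the category HDAh: right lifting property with respect to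
HDPh (morphisms of unfoldings corresponding to HDP-morphisms under the
projections). -/
def IsOpenHDAh {X Y : HDA} (UX : Unfolding X) (UY : Unfolding Y)
    (f : HDAHom UX.Xu UY.Xu) : Prop :=
  ∀ (P Q : HDA) (UP : Unfolding P) (UQ : Unfolding Q) (g : HDAHom UP.Xu UQ.Xu),
    (∃ g₀ : HDAHom P Q, IsHDPHom g₀ ∧ UQ.proj.comp g = g₀.comp UP.proj) →
    ∀ (p : HDAHom UP.Xu UX.Xu) (q : HDAHom UQ.Xu UY.Xu),
      f.comp p = q.comp g →
      ∃ r : HDAHom UQ.Xu UX.Xu, r.comp g = p ∧ f.comp r = q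

/-- Homotopy bisimilarity: a span of open maps in HDAh. -/
def HomotopyBisimilar (X Y : HDA) : Prop :=
  ∃ (Z : HDA) (UX : Unfolding X) (UY : Unfolding Y) (UZ : Unfolding Z)
    (f : HDAHom UZ.Xu UX.Xu) (g : HDAHom UZ.Xu UY.Xu),
    IsOpenHDAh UZ UX f ∧ IsOpenHDAh UZ UY g

/-- Prefix-matching bisimulation on unfoldings (condition (4) of Prop 6.5). -/
def PrefixBisim {X Y : HDA} (UX : Unfolding X) (UY : Unfolding Y) : Prop :=
  ∃ R : Set (UX.Xu.toPCSet.Cell × UY.Xu.toPCSet.Cell),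
    PrecubRel UX.Xu.toPCSet UY.Xu.toPCSet R ∧
    ((⟨0, UX.Xu.base⟩, ⟨0, UY.Xu.base⟩) : _ × _) ∈ R ∧
    ∀ (c : UX.Xu.toPCSet.Cell) (d : UY.Xu.toPCSet.Cell), (c, d) ∈ R →
      (∀ c₂, UX.ClassLe c c₂ → ∃ d₂, UY.ClassLe d d₂ ∧ (c₂, d₂) ∈ R) ∧
      (∀ d₂, UY.ClassLe d d₂ → ∃ c₂, UX.ClassLe c c₂ ∧ (c₂, d₂) ∈ R)

/-- One refinement step of the fixed-point algorithm deciding hd-bisimilarity. -/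
def refineStep (X Y : HDA) (S : Set (X.toPCSet.Cell × Y.toPCSet.Cell)) :
    Set (X.toPCSet.Cell × Y.toPCSet.Cell) :=
  { p | p ∈ S ∧ p.1.1 = p.2.1 ∧
    (∀ (n : ℕ) (x : X.cube (n + 1)) (y : Y.cube (n + 1)),
      p = (⟨n + 1, x⟩, ⟨n + 1, y⟩) →
      ∀ (ν : Bool) (k : Fin (n + 1)),
        ((⟨n, X.toPCSet.face ν k x⟩, ⟨n, Y.toPCSet.face ν k y⟩) : _ × _) ∈ S) ∧
    (∀ (n : ℕ) (x₁ : X.cube n) (y₁ : Y.cube n),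
      p = (⟨n, x₁⟩, ⟨n, y₁⟩) →
      (∀ (x₂ : X.cube (n + 1)) (k : Fin (n + 1)), x₁ = X.toPCSet.face false k x₂ →
        ∃ y₂ : Y.cube (n + 1), y₁ = Y.toPCSet.face false k y₂ ∧
          ((⟨n + 1, x₂⟩, ⟨n + 1, y₂⟩) : _ × _) ∈ S) ∧
      (∀ (y₂ : Y.cube (n + 1)) (k : Fin (n + 1)), y₁ = Y.toPCSet.face false k y₂ →
        ∃ x₂ : X.cube (n + 1), x₁ = X.toPCSet.face false k x₂ ∧
          ((⟨n + 1, x₂⟩, ⟨n + 1, y₂⟩) : _ × _) ∈ S)) }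

/-!
Induct on the path from its end. A fan followed by an upward step is again a fan. If a fan
ending in the `(d+1)`-cube `u` is followed by the downward step to `δ_κ^1 u`, its final ascending
run of lower faces `x_0, …, x_d, u` is turned into a zigzag from the top down: first the face
`δ_l^0 u` below the peak is exchanged, by the precubical identity and adjacency (1), for another
lower face `δ_{l'}^0 u` with `l' ≠ κ`; then adjacency (3) or (4) replaces the peak `u` by the
valley `δ_m^1 δ_{l'}^0 u`, and the shorter run ending in `δ_{l'}^0 u` is treated recursively. The
result is a fan with one more round trip through dimensions `0, 1` and end cube of dimension `d`.
-/

namespace PCSet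

variable {X : PCSet}

theorem step_face_false {n : ℕ} (k : Fin (n + 1)) (c : X.cube (n + 1)) :
    X.Step ⟨n, X.face false k c⟩ ⟨n + 1, c⟩ :=
  Or.inl ⟨n, k, c, rfl, rfl⟩

theorem step_face_true {n : ℕ} (k : Fin (n + 1)) (c : X.cube (n + 1)) :
    X.Step ⟨n + 1, c⟩ ⟨n, X.face true k c⟩ :=
  Or.inr ⟨n, k, c, rfl, rfl⟩

theorem exists_eq_face_false_of_step {n : ℕ} {a : X.Cell} {c : X.cube (n + 1)}
    (h : X.Step a ⟨n + 1, c⟩) (ha : a.1 = n) : ∃ k, a = ⟨n, X.face false k c⟩ := by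
  rcases h with ⟨m, k, c', rfl, hc⟩ | ⟨m, k, c', rfl, hc⟩
  · obtain ⟨hnm, hcc⟩ := Sigma.mk.inj_iff.mp hc
    obtain rfl : n = m := by omega
    obtain rfl := eq_of_heq hcc
    exact ⟨k, rfl⟩
  · have := congrArg Sigma.fst hc
    simp only at ha this
    omega

theorem IsCubePath.append_append_congr {A B l₁ l₂ : List X.Cell}
    (h : X.IsCubePath (A ++ l₁ ++ B)) (h₁ : X.IsCubePath l₁) (h₂ : X.IsCubePath l₂)
    (hhead : l₁.head? = l₂.head?) (hlast : l₁.getLast? = l₂.getLast?) :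
    X.IsCubePath (A ++ l₂ ++ B) := by
  have hc : (A ++ l₁ ++ B).IsChain X.Step := h.2
  refine ⟨by simp [h₂.1], ?_⟩
  show (A ++ l₂ ++ B).IsChain X.Step
  rw [List.isChain_append, List.isChain_append, List.getLast?_append_of_ne_nil _ h₁.1]
    at hc
  rw [List.isChain_append, List.isChain_append, List.getLast?_append_of_ne_nil _ h₂.1,
    ← hhead, ← hlast]
  exact ⟨⟨hc.1.1, h₂.2, hc.1.2.2⟩, hc.2⟩

theorem Adjacent.head?_eq {l₁ l₂ : List X.Cell} (h : X.Adjacent l₁ l₂) :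
    l₁.head? = l₂.head? := by
  obtain ⟨-, -, -, p, hp, -, heq, -⟩ := h
  rw [List.head?_eq_getElem?, List.head?_eq_getElem?, heq 0 (by omega)]

theorem Adjacent.getLast?_eq {l₁ l₂ : List X.Cell} (h : X.Adjacent l₁ l₂) :
    l₁.getLast? = l₂.getLast? := by
  obtain ⟨-, -, hlen, p, -, hp, heq, -⟩ := h
  rw [List.getLast?_eq_getElem?, List.getLast?_eq_getElem?, ← hlen, heq _ (by omega)]

theorem Adjacent.append_append {l₁ l₂ : List X.Cell} (h : X.Adjacent l₁ l₂)
    (A B : List X.Cell) (hc : X.IsCubePath (A ++ l₁ ++ B)) :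
    X.Adjacent (A ++ l₁ ++ B) (A ++ l₂ ++ B) := by
  have hc₂ := hc.append_append_congr h.1 h.2.1 h.head?_eq h.getLast?_eq
  obtain ⟨-, -, hlen, p, hp0, hp1, heq, hne, a, b, b', c, ha, hb, hb', hc', hadj⟩ := h
  have shift : ∀ (l : List X.Cell) (q : ℕ), q < l.length →
      (A ++ l ++ B)[A.length + q]? = l[q]? := by
    intro l q hq
    rw [List.append_assoc, List.getElem?_append_right (by omega), Nat.add_sub_cancel_left,
      List.getElem?_append_left hq]
  refine ⟨hc, hc₂, by simp [hlen], A.length + p, by omega,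
    by simp only [List.length_append]; omega, ?_, ?_, a, b, b', c, ?_, ?_, ?_, ?_, hadj⟩
  · intro q hq
    rcases lt_or_ge q A.length with hqA | hqA
    · simp only [List.append_assoc, List.getElem?_append_left hqA]
    · obtain ⟨r, rfl⟩ := Nat.exists_eq_add_of_le hqA
      simp only [List.append_assoc, List.getElem?_append_right hqA, Nat.add_sub_cancel_left,
        List.getElem?_append, hlen, heq r (by omega)]
  · rwa [shift _ _ (by omega), shift _ _ (by omega)]
  · rw [← ha, show A.length + p - 1 = A.length + (p - 1) by omega, shift _ _ (by omega)]
  · rw [← hb, shift _ _ (by omega)]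
  · rw [← hb', shift _ _ (by omega)]
  · rw [← hc', show A.length + p + 1 = A.length + (p + 1) by omega, shift _ _ (by omega)]

theorem Homotopic.isCubePath {l₁ l₂ : List X.Cell} (h : X.Homotopic l₁ l₂)
    (h₁ : X.IsCubePath l₁) : X.IsCubePath l₂ := by
  induction h with
  | refl => exact h₁
  | tail _ hadj _ => exact hadj.2.1

theorem Homotopic.head?_eq {l₁ l₂ : List X.Cell} (h : X.Homotopic l₁ l₂) :
    l₁.head? = l₂.head? := by
  induction h with
  | refl => rfl
  | tail _ hadj ih => exact ih.trans hadj.head?_eq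

theorem Homotopic.append_append {l₁ l₂ : List X.Cell} (h : X.Homotopic l₁ l₂)
    (A B : List X.Cell) (hc : X.IsCubePath (A ++ l₁ ++ B)) :
    X.Homotopic (A ++ l₁ ++ B) (A ++ l₂ ++ B) := by
  induction h with
  | refl => exact .refl
  | tail _ hadj ih => exact ih.tail (hadj.append_append A B (ih.isCubePath hc))

theorem IsCubePath.infix {l L : List X.Cell} (h : X.IsCubePath L) (hl : l <:+: L)
    (hne : l ≠ []) : X.IsCubePath l :=
  ⟨hne, List.IsChain.infix h.2 hl⟩

theorem homotopic_triple {a b b' c : X.Cell} (hab : X.Step a b) (hbc : X.Step b c)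
    (hab' : X.Step a b') (hb'c : X.Step b' c) (h : X.AdjMid a b b' c) :
    X.Homotopic [a, b, c] [a, b', c] := by
  by_cases hbb : b = b'
  · subst hbb
    exact .refl
  refine .single ⟨⟨by simp, .cons_cons hab (.cons_cons hbc (.singleton c))⟩,
    ⟨by simp, .cons_cons hab' (.cons_cons hb'c (.singleton c))⟩, rfl, 1, by omega, by simp,
    ?_, by simpa using hbb, a, b, b', c, rfl, rfl, rfl, rfl, h⟩
  rintro (_ | _ | _ | q) hq <;> simp_all

theorem exists_homotopic_lower_face_ne {d : ℕ} (u : X.cube (d + 2)) (l κ : Fin (d + 2))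
    (j : Fin (d + 1)) :
    ∃ (l₂ : Fin (d + 2)) (j₂ : Fin (d + 1)), l₂ ≠ κ ∧
      X.face false j (X.face false l u) = X.face false j₂ (X.face false l₂ u) ∧
      X.Homotopic
        [⟨d, X.face false j (X.face false l u)⟩, ⟨d + 1, X.face false l u⟩, ⟨d + 2, u⟩]
        [⟨d, X.face false j (X.face false l u)⟩, ⟨d + 1, X.face false l₂ u⟩,
          ⟨d + 2, u⟩] := by
  rcases ne_or_eq l κ with hlκ | rfl
  · exact ⟨l, j, hlκ, rfl, .refl⟩
  rcases lt_or_ge j.1 l.1 with hjl | hlj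
  · have he : X.face false j (X.face false l u) =
        X.face false ⟨l.1 - 1, by omega⟩ (X.face false j.castSucc u) :=
      X.precub false false j l j.2 l.2 hjl u
    refine ⟨j.castSucc, _, Fin.ne_of_lt hjl, he, homotopic_triple (step_face_false _ _)
      (step_face_false _ _) (by rw [he]; exact step_face_false _ _) (step_face_false _ _)
      (Or.inl ⟨d, j, l, j.2, l.2, hjl, u, rfl, rfl, rfl, rfl, by rw [he]; rfl⟩)⟩
  · have he : X.face false j (X.face false l u) =
        X.face false ⟨l.1, by omega⟩ (X.face false j.succ u) :=
      (X.precub false false l (j + 1) (by omega) (by omega) (by omega) u).symm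
    refine ⟨j.succ, _, Fin.ne_of_gt (by rw [Fin.lt_def, Fin.val_succ]; omega), he,
      homotopic_triple (step_face_false _ _) (step_face_false _ _)
      (by rw [he]; exact step_face_false _ _) (step_face_false _ _)
      (Or.inr (Or.inr (Or.inr (Or.inr (Or.inl
        ⟨d, l, j + 1, by omega, by omega, by omega, u, rfl, rfl, rfl, by rw [he]; rfl,
          rfl⟩)))))⟩

theorem exists_homotopic_peak_valley {d : ℕ} (u : X.cube (d + 2)) {l κ : Fin (d + 2)}
    (hlκ : l ≠ κ) :
    ∃ m : Fin (d + 1), X.Homotopic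
      [⟨d + 1, X.face false l u⟩, ⟨d + 2, u⟩, ⟨d + 1, X.face true κ u⟩]
      [⟨d + 1, X.face false l u⟩, ⟨d, X.face true m (X.face false l u)⟩,
        ⟨d + 1, X.face true κ u⟩] := by
  rcases lt_or_gt_of_ne (Fin.val_ne_of_ne hlκ) with hlk | hkl
  · have he : X.face false ⟨l.1, by omega⟩ (X.face true κ u) =
        X.face true ⟨κ.1 - 1, by omega⟩ (X.face false l u) :=
      X.precub false true l κ (by omega) κ.2 hlk u
    exact ⟨_, homotopic_triple (step_face_false _ _) (step_face_true _ _)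
      (step_face_true _ _) (by rw [← he]; exact step_face_false _ _)
      (Or.inr (Or.inr (Or.inr (Or.inr (Or.inr (Or.inr (Or.inl
        ⟨d, l, κ, by omega, κ.2, hlk, u, rfl, by rw [he], rfl, rfl⟩)))))))⟩
  · have he : X.face true ⟨κ.1, by omega⟩ (X.face false l u) =
        X.face false ⟨l.1 - 1, by omega⟩ (X.face true κ u) :=
      X.precub true false κ l (by omega) l.2 hkl u
    exact ⟨_, homotopic_triple (step_face_false _ _) (step_face_true _ _)
      (step_face_true _ _) (by rw [he]; exact step_face_false _ _)
      (Or.inr (Or.inr (Or.inr (Or.inr (Or.inr (Or.inr (Or.inr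
        ⟨d, κ, l, by omega, l.2, hkl, u, rfl, rfl, rfl, rfl⟩)))))))⟩

theorem exists_eq_append_face_false {n : ℕ} {A B : List X.Cell} {c : X.cube (n + 1)}
    (hc : (A ++ ⟨n + 1, c⟩ :: B).IsChain X.Step) (hA : A.map Sigma.fst = List.range (n + 1)) :
    ∃ (A' : List X.Cell) (k : Fin (n + 1)), A = A' ++ [⟨n, X.face false k c⟩] ∧
      A'.map Sigma.fst = List.range n := by
  rw [List.range_succ, List.map_eq_append_iff] at hA
  obtain ⟨A', t, rfl, hA', ht⟩ := hA
  obtain ⟨a, rfl, ha⟩ := List.map_eq_singleton_iff.mp ht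
  have hstep : X.Step a ⟨n + 1, c⟩ :=
    List.isChain_pair.mp (hc.infix ⟨A', B, by simp⟩)
  obtain ⟨k, rfl⟩ := exists_eq_face_false_of_step hstep ha
  exact ⟨A', k, rfl, hA'⟩

theorem exists_homotopic_zigzag {d : ℕ} {A : List X.Cell} {u : X.cube (d + 1)}
    {κ : Fin (d + 1)} (hc : X.IsCubePath (A ++ [⟨d + 1, u⟩, ⟨d, X.face true κ u⟩]))
    (hA : A.map Sigma.fst = List.range (d + 1)) :
    ∃ M : List X.Cell, M.map Sigma.fst = 0 :: 1 :: List.range d ∧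
      X.Homotopic (A ++ [⟨d + 1, u⟩, ⟨d, X.face true κ u⟩])
        (M ++ [⟨d, X.face true κ u⟩]) := by
  induction d generalizing A with
  | zero => exact ⟨A ++ [⟨1, u⟩], by simp [hA], by simpa using .refl⟩
  | succ d ih =>
    obtain ⟨A₁, l, rfl, hA₁⟩ := exists_eq_append_face_false hc.2 hA
    obtain ⟨A', j, rfl, hA'⟩ := exists_eq_append_face_false (c := X.face false l u)
      (B := [⟨d + 2, u⟩, ⟨d + 1, X.face true κ u⟩])
      (by rw [List.append_assoc] at hc; exact hc.2) hA₁
    obtain ⟨l₂, j₂, hl₂κ, he, hom₁⟩ := exists_homotopic_lower_face_ne u l κ j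
    obtain ⟨m, hom₂⟩ := exists_homotopic_peak_valley u hl₂κ
    have hc₁ : X.IsCubePath (A' ++ [⟨d, X.face false j (X.face false l u)⟩,
        ⟨d + 1, X.face false l u⟩, ⟨d + 2, u⟩] ++ [⟨d + 1, X.face true κ u⟩]) := by
      simpa using hc
    have hom₁' := hom₁.append_append A' [⟨d + 1, X.face true κ u⟩] hc₁
    have hc₂ : X.IsCubePath (A' ++ [⟨d, X.face false j₂ (X.face false l₂ u)⟩] ++
        [⟨d + 1, X.face false l₂ u⟩, ⟨d + 2, u⟩, ⟨d + 1, X.face true κ u⟩] ++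
        []) := by
      simpa [he] using hom₁'.isCubePath hc₁
    have hom₂' := hom₂.append_append _ [] hc₂
    have hc₃ : X.IsCubePath (A' ++ [⟨d, X.face false j₂ (X.face false l₂ u)⟩] ++
        [⟨d + 1, X.face false l₂ u⟩, ⟨d, X.face true m (X.face false l₂ u)⟩] ++
        [⟨d + 1, X.face true κ u⟩]) := by
      simpa using hom₂'.isCubePath hc₂
    obtain ⟨M, hM, hom₃⟩ := ih (u := X.face false l₂ u) (κ := m)
      (hc₃.infix ⟨[], _, rfl⟩ (by simp)) (by simp [hA', List.range_succ])
    have hom₃' := hom₃.append_append [] [⟨d + 1, X.face true κ u⟩] (by simpa using hc₃)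
    refine ⟨M ++ [⟨d, X.face true m (X.face false l₂ u)⟩],
      by simp [hM, List.range_succ], ?_⟩
    simp only [List.append_assoc, List.cons_append, List.nil_append, List.append_nil, he]
      at hom₁' hom₂' hom₃' ⊢
    exact (hom₁'.trans hom₂').trans hom₃'

def fanDims (p n : ℕ) : List ℕ := (List.range (2 * p)).map (· % 2) ++ List.range (n + 1)

theorem getElem_fanDims {p n i : ℕ} (hi : i < (fanDims p n).length) :
    (fanDims p n)[i] = if i < 2 * p then i % 2 else i - 2 * p := by
  simp only [fanDims, List.getElem_append, List.length_map, List.length_range,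
    List.getElem_map, List.getElem_range, dite_eq_ite]

theorem isFan_of_map_fst_eq_fanDims {l : List X.Cell} {p n : ℕ}
    (hl : l.map Sigma.fst = fanDims p n) : IsFan X l := by
  have hlen : l.length = 2 * p + n + 1 := by
    simpa [fanDims, Nat.add_assoc] using congrArg List.length hl
  obtain ⟨⟨m, c⟩, hz⟩ : ∃ z, l.getLast? = some z :=
    ⟨_, List.getLast?_eq_some_getLast (List.ne_nil_of_length_pos (by omega))⟩
  have hm : m = n := by
    simpa [hz, fanDims, List.range_succ] using congrArg List.getLast? hl
  subst hm
  refine ⟨m, c, hz, fun i hi => ?_⟩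
  have hdim : (l.get ⟨i, hi⟩).1 = (fanDims p m)[i]'(by simp [← hl, hi]) :=
    (List.getElem_map Sigma.fst).symm.trans (List.getElem_of_eq hl (by simpa using hi))
  rw [hdim, getElem_fanDims]
  constructor <;> intro <;> split_ifs <;> omega

theorem exists_homotopic_fanDims_append {f : List X.Cell} {x : X.Cell} {p n : ℕ}
    (hc : X.IsCubePath (f ++ [x])) (hf : f.map Sigma.fst = fanDims p n) :
    ∃ g p' n', X.Homotopic (f ++ [x]) g ∧ g.map Sigma.fst = fanDims p' n' := by
  rw [fanDims, List.range_succ, ← List.append_assoc, List.map_eq_append_iff] at hf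
  obtain ⟨F, t, rfl, hF, ht⟩ := hf
  obtain ⟨z, rfl, rfl⟩ := List.map_eq_singleton_iff.mp ht
  have hstep : X.Step z x := List.isChain_pair.mp (hc.2.infix ⟨F, [], by simp⟩)
  rcases hstep with ⟨m, k, c, rfl, rfl⟩ | ⟨m, k, c, rfl, rfl⟩
  · exact ⟨_, p, m + 1, .refl, by simp [hF, fanDims, List.range_succ]⟩
  · rw [List.map_eq_append_iff] at hF
    obtain ⟨P, A, rfl, hP, hA⟩ := hF
    obtain ⟨M, hM, hom⟩ :=
      exists_homotopic_zigzag (u := c) (κ := k) (hc.infix ⟨P, [], by simp⟩ (by simp)) hA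
    refine ⟨P ++ M ++ [⟨m, X.face true k c⟩], p + 1, m,
      by simpa using hom.append_append P [] (by simpa using hc), ?_⟩
    simp [hP, hM, fanDims, Nat.mul_succ, List.range_succ, Nat.add_mod]

theorem exists_homotopic_fanDims {i : X.cube 0} {l : List X.Cell} (hl : X.IsCubePath l)
    (hi : l.head? = some ⟨0, i⟩) :
    ∃ l' p n, X.Homotopic l l' ∧ l'.map Sigma.fst = fanDims p n := by
  induction l using List.reverseRecOn with
  | nil => simp at hi
  | append_singleton l x ih =>
    rcases eq_or_ne l [] with rfl | hne
    · obtain rfl : x = ⟨0, i⟩ := by simpa using hi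
      exact ⟨_, 0, 0, .refl, rfl⟩
    rw [List.head?_append_of_ne_nil _ hne] at hi
    obtain ⟨f, p, n, hlf, hf⟩ := ih (hl.infix ⟨[], [x], by simp⟩ hne) hi
    have hlfx : X.Homotopic (l ++ [x]) (f ++ [x]) := by
      simpa using hlf.append_append [] [x] (by simpa using hl)
    obtain ⟨g, p', n', hfg, hg⟩ := exists_homotopic_fanDims_append (hlfx.isCubePath hl) hf
    exact ⟨g, p', n', hlfx.trans hfg, hg⟩

end PCSet

/-- Lemma 4.6: any pointed cube path in a higher-dimensional automaton is
homotopic to a fan-shaped one. -/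
theorem pointed_path_homotopic_fan (X : HDA) (l : List X.toPCSet.Cell)
    (h : X.IsPointedPath l) :
    ∃ l' : List X.toPCSet.Cell, X.IsPointedPath l' ∧ IsFan X.toPCSet l' ∧
      X.toPCSet.Homotopic l l' := by
  obtain ⟨l', p, n, hll', hl'⟩ := exists_homotopic_fanDims h.1 h.2
  exact ⟨l', ⟨hll'.isCubePath h.1, hll'.head?_eq ▸ h.2⟩,
    isFan_of_map_fst_eq_fanDims hl', hll'⟩
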